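/- arXiv:2110.11625 — 6 statements merged into one kernel-verified Lean document; each statement's English description precedes it below -/
import Mathlib

section
/- Let 0 < γ < β. For each i ∈ [0, i*] with i* ∈ (0,1), the equation -x + (γ/β) log x = i - i* + (γ/β) log(γ/β) - γ/β has exactly one solution x = φ(i) satisfying x ≥ γ/β. -/
/-!
For `c > 0` the map `x ↦ -x + c log x` has derivative `c/x - 1 < 0` on `(c, ∞)` and tends to `-∞`
(since `log = o(id)`), so it maps `[c, ∞)` bijectively onto `(-∞, -c + c log c]`. With `c = γ/β`,
the right-hand side lies in this range because `i ≤ i*`.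
-/

open Set Filter Asymptotics Real

theorem continuousOn_neg_add_mul_log {c : ℝ} (hc : 0 < c) :
    ContinuousOn (fun x : ℝ => -x + c * log x) (Ici c) :=
  continuousOn_id.neg.add <| continuousOn_const.mul <|
    continuousOn_log.mono fun _ hx => (hc.trans_le hx).ne'

theorem strictAntiOn_neg_add_mul_log {c : ℝ} (hc : 0 < c) :
    StrictAntiOn (fun x : ℝ => -x + c * log x) (Ici c) := by
  refine strictAntiOn_of_deriv_neg (convex_Ici c) (continuousOn_neg_add_mul_log hc) fun x hx => ?_
  rw [interior_Ici] at hx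
  have hx0 : 0 < x := hc.trans hx
  have hderiv : HasDerivAt (fun x : ℝ => -x + c * log x) (-1 + c * x⁻¹) x :=
    (hasDerivAt_neg x).add ((hasDerivAt_log hx0.ne').const_mul c)
  rw [hderiv.deriv]
  have : c * x⁻¹ < 1 := by rwa [mul_inv_lt_iff₀ hx0, one_mul]
  linarith

theorem tendsto_neg_add_mul_log_atTop_atBot (c : ℝ) :
    Tendsto (fun x : ℝ => -x + c * log x) atTop atBot := by
  have hequiv : (fun x : ℝ => -x + c * log x) ~[atTop] fun x => -x :=
    IsEquivalent.refl.add_isLittleO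
      (isLittleO_log_id_atTop.const_mul_left c).neg_right
  exact hequiv.symm.tendsto_atBot tendsto_neg_atTop_atBot

theorem image_Ici_neg_add_mul_log {c : ℝ} (hc : 0 < c) :
    (fun x : ℝ => -x + c * log x) '' Ici c = Iic (-c + c * log c) :=
  (continuousOn_neg_add_mul_log hc).image_Ici_of_antitoneOn
    (strictAntiOn_neg_add_mul_log hc).antitoneOn (tendsto_neg_add_mul_log_atTop_atBot c)

theorem existsUnique_neg_add_mul_log_eq {c t : ℝ} (hc : 0 < c) (ht : t ≤ -c + c * log c) :
    ∃! x : ℝ, c ≤ x ∧ -x + c * log x = t := by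
  obtain ⟨x, hx, rfl⟩ : t ∈ (fun x : ℝ => -x + c * log x) '' Ici c := by
    rwa [image_Ici_neg_add_mul_log hc]
  exact ⟨x, ⟨hx, rfl⟩, fun y ⟨hy, hyx⟩ => (strictAntiOn_neg_add_mul_log hc).injOn hy hx hyx⟩

theorem green_zone_unique_solution_general
    (β γ istar : ℝ) (hγ : 0 < γ) (hγβ : γ < β) :
    ∀ iv ∈ Icc (0:ℝ) istar,
      ∃! x : ℝ, γ / β ≤ x ∧
        -x + (γ / β) * Real.log x
          = iv - istar + (γ / β) * Real.log (γ / β) - γ / β := by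
  intro iv hiv
  exact existsUnique_neg_add_mul_log_eq (div_pos hγ (hγ.trans hγβ)) (by linarith [hiv.2])

/-- for `0 < γ < β` and `i ∈ [0, i*]`, the equation
`-x + (γ/β) log x = i - i* + (γ/β) log(γ/β) - γ/β` has exactly one solution
`x ≥ γ/β`. -/
theorem green_zone_unique_solution
    (β γ istar : ℝ) (hγ : 0 < γ) (hγβ : γ < β) (histar : istar ∈ Ioo (0:ℝ) 1) :
    ∀ iv ∈ Icc (0:ℝ) istar,
      ∃! x : ℝ, γ / β ≤ x ∧
        -x + (γ / β) * Real.log x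
          = iv - istar + (γ / β) * Real.log (γ / β) - γ / β :=
  green_zone_unique_solution_general β γ istar hγ hγβ
end

section
/- Let 0 < γ < β(1-ā) with ā ∈ (0,1), and let ψ(i) for i ∈ (0, i*] be the unique solution x ≥ γ/(β(1-ā)) of -x + (γ/(β(1-ā))) log x = i - i* + (γ/(β(1-ā))) log(γ/(β(1-ā))) - γ/(β(1-ā)). Then ψ is strictly decreasing in i, ψ(i*) = γ/(β(1-ā)), and ψ'(i) = β(1-ā)ψ(i) / (γ - β(1-ā)ψ(i)) for i ∈ (0, i*). -/
open Set Filter Topology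

/-!
Put `c = γ/(β(1-ā))` and `F x = -x + c log x`. The defining equation says `F (ψ i) = i + k` for a
constant `k`, and `F` is strictly decreasing on `[c, ∞)` since `F' x = -1 + c/x < 0` there. Hence
`ψ` is strictly decreasing, `ψ(i*) = c` because `F (ψ i*) = F c`, and `ψ` is locally the inverse of
`x ↦ F x - k`, so by the inverse function theorem `ψ' = 1 / F'(ψ) = ψ / (c - ψ)`.
-/

section InverseOfStrictAnti

variable {F ψ : ℝ → ℝ} {s t : Set ℝ} {k : ℝ}

theorem strictAntiOn_of_strictAntiOn_comp_eq_add (hF : StrictAntiOn F t) (hmaps : MapsTo ψ s t)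
    (heq : ∀ i ∈ s, F (ψ i) = i + k) : StrictAntiOn ψ s := fun x hx y hy hxy =>
  (hF.lt_iff_gt (hmaps hx) (hmaps hy)).mp (by rw [heq x hx, heq y hy]; linarith)

theorem continuousAt_of_strictAntiOn_comp_eq_add {a : ℝ} (hF : StrictAntiOn F t)
    (hFc : ContinuousAt F (ψ a)) (ht : t ∈ 𝓝 (ψ a)) (hs : s ∈ 𝓝 a) (hmaps : MapsTo ψ s t)
    (heq : ∀ i ∈ s, F (ψ i) = i + k) : ContinuousAt ψ a := by
  have hanti := (strictAntiOn_of_strictAntiOn_comp_eq_add hF hmaps heq).antitoneOn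
  have hsub : t ∩ (fun y => F y - k) ⁻¹' s ⊆ ψ '' s := by
    rintro y ⟨hyt, hys⟩
    refine ⟨F y - k, hys, hF.injOn (hmaps hys) hyt ?_⟩
    rw [heq _ hys]
    ring
  have hpre : (fun y => F y - k) ⁻¹' s ∈ 𝓝 (ψ a) := by
    refine (hFc.sub continuousAt_const).preimage_mem_nhds ?_
    rwa [Pi.sub_apply, heq a (mem_of_mem_nhds hs), add_sub_cancel_right]
  exact continuousAt_of_monotoneOn_of_image_mem_nhds (β := ℝᵒᵈ) hanti.dual_right hs
    (mem_of_superset (inter_mem ht hpre) hsub)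

theorem hasDerivAt_inv_of_strictAntiOn_comp_eq_add {a F' : ℝ} (hF : StrictAntiOn F t)
    (hFd : HasDerivAt F F' (ψ a)) (hF' : F' ≠ 0) (ht : t ∈ 𝓝 (ψ a)) (hs : s ∈ 𝓝 a)
    (hmaps : MapsTo ψ s t) (heq : ∀ i ∈ s, F (ψ i) = i + k) : HasDerivAt ψ F'⁻¹ a := by
  have hcont := continuousAt_of_strictAntiOn_comp_eq_add hF hFd.continuousAt ht hs hmaps heq
  refine (hFd.sub_const k).of_local_left_inverse hcont hF' ?_
  filter_upwards [hs] with i hi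
  rw [heq i hi, add_sub_cancel_right]

end InverseOfStrictAnti

section NegAddMulLog

variable {c : ℝ}

noncomputable def negAddMulLog (c x : ℝ) : ℝ := -x + c * Real.log x

theorem hasDerivAt_negAddMulLog {x : ℝ} (hx : 0 < x) :
    HasDerivAt (negAddMulLog c) (-1 + c * x⁻¹) x :=
  (hasDerivAt_neg x).add ((Real.hasDerivAt_log hx.ne').const_mul c)

theorem negAddMulLog_deriv_neg {x : ℝ} (hc : 0 < c) (hx : c < x) : -1 + c * x⁻¹ < 0 := by
  have : c * x⁻¹ < 1 := by rwa [mul_inv_lt_iff₀ (hc.trans hx), one_mul]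
  linarith

theorem strictAntiOn_negAddMulLog (hc : 0 < c) : StrictAntiOn (negAddMulLog c) (Ici c) := by
  refine strictAntiOn_of_deriv_neg (convex_Ici c) ?_ ?_
  · exact fun x hx => (hasDerivAt_negAddMulLog (hc.trans_le hx)).continuousAt.continuousWithinAt
  · intro x hx
    rw [interior_Ici] at hx
    rw [(hasDerivAt_negAddMulLog (hc.trans hx)).deriv]
    exact negAddMulLog_deriv_neg hc hx

end NegAddMulLog

theorem psi_properties_general
    (β γ abar istar : ℝ) (hγ : 0 < γ)
    (hcond : γ < β * (1 - abar)) (histar : istar ∈ Ioo (0:ℝ) 1)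
    (ψ : ℝ → ℝ)
    (hψ : ∀ iv ∈ Ioc (0:ℝ) istar,
      γ / (β * (1 - abar)) ≤ ψ iv ∧
      -ψ iv + (γ / (β * (1 - abar))) * Real.log (ψ iv)
        = iv - istar + (γ / (β * (1 - abar))) * Real.log (γ / (β * (1 - abar)))
            - γ / (β * (1 - abar))) :
    StrictAntiOn ψ (Ioc (0:ℝ) istar) ∧
    ψ istar = γ / (β * (1 - abar)) ∧
    ∀ iv ∈ Ioo (0:ℝ) istar,
      HasDerivAt ψ (β * (1 - abar) * ψ iv / (γ - β * (1 - abar) * ψ iv)) iv := by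
  set B := β * (1 - abar)
  set c := γ / B with hc_def
  have hB : 0 < B := hγ.trans hcond
  have hc : 0 < c := div_pos hγ hB
  have hF := strictAntiOn_negAddMulLog hc
  have hmaps : MapsTo ψ (Ioc 0 istar) (Ici c) := fun i hi => (hψ i hi).1
  have heq : ∀ i ∈ Ioc 0 istar, negAddMulLog c (ψ i) = i + (negAddMulLog c c - istar) :=
    fun i hi => by rw [negAddMulLog, negAddMulLog, (hψ i hi).2]; ring
  have hanti := strictAntiOn_of_strictAntiOn_comp_eq_add hF hmaps heq
  have histar_mem : istar ∈ Ioc 0 istar := ⟨histar.1, le_rfl⟩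
  have hval : ψ istar = c :=
    hF.injOn (hmaps histar_mem) self_mem_Ici (by rw [heq _ histar_mem]; ring)
  refine ⟨hanti, hval, fun i hi => ?_⟩
  have hgt : c < ψ i := hval ▸ hanti ⟨hi.1, hi.2.le⟩ histar_mem hi.2
  have hderiv := hasDerivAt_inv_of_strictAntiOn_comp_eq_add hF
    (hasDerivAt_negAddMulLog (hc.trans hgt)) (negAddMulLog_deriv_neg hc hgt).ne
    (Ici_mem_nhds hgt) (mem_of_superset (Ioo_mem_nhds hi.1 hi.2) Ioo_subset_Ioc_self) hmaps heq
  have hψ0 : ψ i ≠ 0 := (hc.trans hgt).ne'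
  have hF' : -1 + c * (ψ i)⁻¹ = (γ - B * ψ i) / (B * ψ i) := by
    rw [hc_def]
    field_simp
    ring
  rwa [hF', inv_div] at hderiv

/-- the yellow-zone boundary function `ψ` is strictly decreasing,
`ψ(i*) = γ/(β(1-ā))`, and satisfies the stated ODE on `(0, i*)`. -/
theorem psi_properties
    (β γ abar istar : ℝ) (hγ : 0 < γ) (habar : abar ∈ Ioo (0:ℝ) 1)
    (hcond : γ < β * (1 - abar)) (histar : istar ∈ Ioo (0:ℝ) 1)
    (ψ : ℝ → ℝ)
    (hψ : ∀ iv ∈ Ioc (0:ℝ) istar,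
      γ / (β * (1 - abar)) ≤ ψ iv ∧
      -ψ iv + (γ / (β * (1 - abar))) * Real.log (ψ iv)
        = iv - istar + (γ / (β * (1 - abar))) * Real.log (γ / (β * (1 - abar)))
            - γ / (β * (1 - abar))) :
    StrictAntiOn ψ (Ioc (0:ℝ) istar) ∧
    ψ istar = γ / (β * (1 - abar)) ∧
    ∀ iv ∈ Ioo (0:ℝ) istar,
      HasDerivAt ψ (β * (1 - abar) * ψ iv / (γ - β * (1 - abar) * ψ iv)) iv :=
  psi_properties_general β γ abar istar hγ hcond histar ψ hψ
end

section
/- For (s₀, i₀) in the yellow zone with s₀ > 0, i₀ > 0, the quantity s₁ = s₁(s₀, i₀) > γ/β defined implicitly by s₁ - s₀ - i₀ + i* - (γ/β) log(s₁/s₀) = 0 is a differentiable function of (s₀, i₀) with partial derivatives ∂s₁/∂s₀ = ((βs₀ - γ)s₁)/((βs₁ - γ)s₀) and ∂s₁/∂i₀ = βs₁/(βs₁ - γ). -/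
/-!
With `c = γ / β`, the implicit equation says `g (s₁ s₀ i₀) = s₀ + i₀ - i* - c log s₀` for
`g x = x - c log x`. The function `g` is strictly increasing on `(c, ∞)` with derivative
`1 - c / x ≠ 0` there, so on that branch `s₁` is the composition of the local inverse of `g`
(inverse function theorem) with an explicit smooth function of `(s₀, i₀)`, and the chain rule
gives the partial derivatives.
-/

open Set Filter Topology

section LocalInverse

variable {𝕜 : Type*} [NontriviallyNormedField 𝕜] [CompleteSpace 𝕜]

/-- If `g ∘ f = h` near `x`, with `f` taking values in a neighbourhood of `f x` on which `g` is
injective, then `f` agrees near `x` with the local inverse of `g` composed with `h`. -/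
theorem HasStrictDerivAt.hasDerivAt_of_comp_eq_of_injOn {f g h : 𝕜 → 𝕜} {s : Set 𝕜}
    {x g' h' : 𝕜} (hg : HasStrictDerivAt g g' (f x)) (hg' : g' ≠ 0) (hs : s ∈ 𝓝 (f x))
    (hinj : InjOn g s) (hh : HasDerivAt h h' x) (hfs : ∀ᶠ y in 𝓝 x, f y ∈ s)
    (hgf : ∀ᶠ y in 𝓝 x, g (f y) = h y) : HasDerivAt f (g'⁻¹ * h') x := by
  set L := hg.localInverse g g' (f x) hg'
  have hhx : h x = g (f x) := hgf.self_of_nhds.symm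
  have hL : HasStrictDerivAt L g'⁻¹ (h x) := hhx ▸ hg.to_localInverse hg'
  have hLf : L (h x) = f x := hhx ▸ (hg.eventually_left_inverse hg').self_of_nhds
  have hLh : Tendsto (fun y => L (h y)) (𝓝 x) (𝓝 (f x)) :=
    hLf ▸ hL.hasDerivAt.continuousAt.tendsto.comp hh.continuousAt
  have hright : ∀ᶠ y in 𝓝 x, g (L (h y)) = h y :=
    (hhx ▸ hh.continuousAt.tendsto).eventually (hg.eventually_right_inverse hg')
  have hfL : f =ᶠ[𝓝 x] fun y => L (h y) := by
    filter_upwards [hfs, hgf, hright, hLh.eventually_mem hs] with y hfy hgfy hry hLy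
    exact hinj hfy hLy (hgfy.trans hry.symm)
  exact (hL.hasDerivAt.comp x hh).congr_of_eventuallyEq hfL

end LocalInverse

namespace Real

theorem one_sub_mul_inv_pos {c x : ℝ} (hc : 0 ≤ c) (hx : c < x) : 0 < 1 - c * x⁻¹ := by
  rw [sub_pos, ← div_eq_mul_inv, div_lt_one (hc.trans_lt hx)]
  exact hx

theorem hasStrictDerivAt_sub_mul_log (c : ℝ) {x : ℝ} (hx : x ≠ 0) :
    HasStrictDerivAt (fun x => x - c * log x) (1 - c * x⁻¹) x :=
  (hasStrictDerivAt_id x).sub ((hasStrictDerivAt_log hx).const_mul c)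

theorem strictMonoOn_sub_mul_log {c : ℝ} (hc : 0 ≤ c) :
    StrictMonoOn (fun x => x - c * log x) (Ioi c) := by
  have hderiv : ∀ x ∈ Ioi c, HasDerivAt (fun x => x - c * log x) (1 - c * x⁻¹) x :=
    fun x hx => (hasStrictDerivAt_sub_mul_log c (hc.trans_lt hx).ne').hasDerivAt
  refine strictMonoOn_of_hasDerivWithinAt_pos (f' := fun x => 1 - c * x⁻¹) (convex_Ioi c)
    (fun x hx => (hderiv x hx).continuousAt.continuousWithinAt) ?_ ?_ <;> rw [interior_Ioi]
  · exact fun x hx => (hderiv x hx).hasDerivWithinAt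
  · exact fun x hx => one_sub_mul_inv_pos hc hx

theorem hasDerivAt_of_sub_mul_log_comp_eq {f h : ℝ → ℝ} {c x h' : ℝ} (hc : 0 ≤ c)
    (hh : HasDerivAt h h' x) (hf : ∀ᶠ y in 𝓝 x, c < f y ∧ f y - c * log (f y) = h y) :
    HasDerivAt f ((1 - c * (f x)⁻¹)⁻¹ * h') x := by
  have hfx : c < f x := hf.self_of_nhds.1
  exact (hasStrictDerivAt_sub_mul_log c (hc.trans_lt hfx).ne').hasDerivAt_of_comp_eq_of_injOn
    (one_sub_mul_inv_pos hc hfx).ne' (Ioi_mem_nhds hfx) (strictMonoOn_sub_mul_log hc).injOn hh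
    (hf.mono fun _ hy => hy.1) (hf.mono fun _ hy => hy.2)

end Real

theorem s1_partial_derivatives_general
    (β γ istar : ℝ) (hγ : 0 < γ) (hγβ : γ < β)
    (s₁ : ℝ → ℝ → ℝ) (U : Set (ℝ × ℝ)) (hU : IsOpen U)
    (hdom : ∀ p ∈ U, 0 < p.1 ∧ 0 < p.2 ∧ p.2 ≤ istar)
    (hbr : ∀ p ∈ U, γ / β < s₁ p.1 p.2)
    (heq : ∀ p ∈ U,
      s₁ p.1 p.2 - p.1 - p.2 + istar - (γ / β) * Real.log (s₁ p.1 p.2 / p.1) = 0) :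
    ∀ p ∈ U,
      HasDerivAt (fun x => s₁ x p.2)
        ((β * p.1 - γ) * s₁ p.1 p.2 / ((β * s₁ p.1 p.2 - γ) * p.1)) p.1 ∧
      HasDerivAt (fun y => s₁ p.1 y)
        (β * s₁ p.1 p.2 / (β * s₁ p.1 p.2 - γ)) p.2 := by
  have hβ : 0 < β := hγ.trans hγβ
  have hc : 0 < γ / β := div_pos hγ hβ
  have hsep : ∀ q ∈ U, γ / β < s₁ q.1 q.2 ∧
      s₁ q.1 q.2 - γ / β * Real.log (s₁ q.1 q.2) = q.1 + q.2 - istar - γ / β * Real.log q.1 := by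
    intro q hq
    have h := heq q hq
    rw [Real.log_div (hc.trans (hbr q hq)).ne' (hdom q hq).1.ne', mul_sub] at h
    exact ⟨hbr q hq, by linarith⟩
  intro p hp
  have hp₁ : p.1 ≠ 0 := (hdom p hp).1.ne'
  have hM₀ : s₁ p.1 p.2 ≠ 0 := (hc.trans (hbr p hp)).ne'
  have hβM : β * s₁ p.1 p.2 - γ ≠ 0 := sub_ne_zero.2 ((div_lt_iff₀' hβ).1 (hbr p hp)).ne'
  have hUx : ∀ᶠ x in 𝓝 p.1, (x, p.2) ∈ U :=
    (continuous_id.prodMk continuous_const).continuousAt.preimage_mem_nhds (hU.mem_nhds hp)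
  have hUy : ∀ᶠ y in 𝓝 p.2, (p.1, y) ∈ U :=
    (continuous_const.prodMk continuous_id).continuousAt.preimage_mem_nhds (hU.mem_nhds hp)
  constructor
  · have hh := (((hasDerivAt_id' p.1).add_const p.2).sub_const istar).sub
      ((Real.hasDerivAt_log hp₁).const_mul (γ / β))
    refine (Real.hasDerivAt_of_sub_mul_log_comp_eq (f := (s₁ · p.2)) hc.le hh
      (hUx.mono fun x hx => hsep _ hx)).congr_deriv ?_
    field_simp
  · have hh := (((hasDerivAt_id' p.2).const_add p.1).sub_const istar).sub_const
      (γ / β * Real.log p.1)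
    refine (Real.hasDerivAt_of_sub_mul_log_comp_eq (f := s₁ p.1) hc.le hh
      (hUy.mono fun y hy => hsep _ hy)).congr_deriv ?_
    field_simp

/-- the implicitly defined `s₁(s₀,i₀)` is differentiable in each
variable with the stated partial derivatives. -/
theorem s1_partial_derivatives
    (β γ istar : ℝ) (hγ : 0 < γ) (hγβ : γ < β) (histar : istar ∈ Ioo (0:ℝ) 1)
    (s₁ : ℝ → ℝ → ℝ) (U : Set (ℝ × ℝ)) (hU : IsOpen U)
    (hdom : ∀ p ∈ U, 0 < p.1 ∧ 0 < p.2 ∧ p.2 ≤ istar)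
    (hbr : ∀ p ∈ U, γ / β < s₁ p.1 p.2)
    (heq : ∀ p ∈ U,
      s₁ p.1 p.2 - p.1 - p.2 + istar - (γ / β) * Real.log (s₁ p.1 p.2 / p.1) = 0) :
    ∀ p ∈ U,
      HasDerivAt (fun x => s₁ x p.2)
        ((β * p.1 - γ) * s₁ p.1 p.2 / ((β * s₁ p.1 p.2 - γ) * p.1)) p.1 ∧
      HasDerivAt (fun y => s₁ p.1 y)
        (β * s₁ p.1 p.2 / (β * s₁ p.1 p.2 - γ)) p.2 :=
  s1_partial_derivatives_general β γ istar hγ hγβ s₁ U hU hdom hbr heq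
end

section
/- Let c > 0 and let φ : (0, i*] → (c', ∞) (with c' = γ/β < the relevant range) satisfy the implicit relation -φ(i) + (γ/β) log φ(i) = i + K for a constant K, with φ(i) > γ/β. Suppose (s(t), i(t)) solves the SIR system with measurable control a(t) ∈ [0, ā] and i(t) > 0, and s₀ ≤ φ(i₀). Then s(t) ≤ φ(i(t)) for all t ≥ 0 in the interval of definition (forward invariance of the region below the curve). -/
/-!
Without control, `c log s - s - i` with `c = γ/β` is a first integral of the SIR system, and a
control `a ≥ 0` makes it grow at rate `γ a i`. Let `V` be `c log x - x` made constant to the left of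
its maximum point `x = c`; `V` is still `C¹`, and `V(s) - i` stays nondecreasing while `s ≤ c`
because `i` decreases there. The curve is the level set `V(φ(i)) = i + K` on `(c, ∞)`, where `V` is
strictly decreasing, so `V(s) - i ≥ K` at time `0` propagates to `s ≤ φ(i)` at all later times.
-/

open Set Filter Topology

noncomputable def flatLogPotential (c x : ℝ) : ℝ :=
  c * Real.log (max x c) - max x c

section flatLogPotential

variable {c : ℝ}

lemma flatLogPotential_of_le {x : ℝ} (h : c ≤ x) :
    flatLogPotential c x = c * Real.log x - x := by
  rw [flatLogPotential, max_eq_left h]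

lemma flatLogPotential_of_ge {x : ℝ} (h : x ≤ c) :
    flatLogPotential c x = c * Real.log c - c := by
  rw [flatLogPotential, max_eq_right h]

lemma hasDerivAt_flatLogPotential (hc : 0 < c) (x : ℝ) :
    HasDerivAt (flatLogPotential c) (c / max x c - 1) x := by
  have hlog : ∀ y, 0 < y → HasDerivAt (fun y => c * Real.log y - y) (c / y - 1) y := fun y hy =>
    (((Real.hasDerivAt_log hy.ne').const_mul c).sub (hasDerivAt_id y)).congr_deriv
      (by rw [div_eq_mul_inv])
  rcases lt_trichotomy x c with hx | rfl | hx
  · have hflat : flatLogPotential c =ᶠ[𝓝 x] fun _ => c * Real.log c - c :=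
      (eventually_lt_nhds hx).mono fun y hy => flatLogPotential_of_ge hy.le
    rw [max_eq_right hx.le, div_self hc.ne', sub_self]
    exact (hasDerivAt_const x _).congr_of_eventuallyEq hflat
  · have hleft : HasDerivWithinAt (flatLogPotential x) 0 (Iic x) x :=
      (hasDerivWithinAt_const x _ _).congr_of_mem (fun y hy => flatLogPotential_of_ge hy)
        self_mem_Iic
    have hright : HasDerivWithinAt (flatLogPotential x) (x / x - 1) (Ici x) x :=
      (hlog x hc).hasDerivWithinAt.congr_of_mem (fun y hy => flatLogPotential_of_le hy)
        self_mem_Ici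
    rw [div_self hc.ne', sub_self] at hright
    rw [max_self, div_self hc.ne', sub_self]
    rw [← hasDerivWithinAt_univ, ← Iic_union_Ici]
    exact hleft.union hright
  · have hlogEq : flatLogPotential c =ᶠ[𝓝 x] fun y => c * Real.log y - y :=
      (eventually_gt_nhds hx).mono fun y hy => flatLogPotential_of_le hy.le
    rw [max_eq_left hx.le]
    exact (hlog x (hc.trans hx)).congr_of_eventuallyEq hlogEq

lemma antitone_flatLogPotential (hc : 0 < c) : Antitone (flatLogPotential c) :=
  antitone_of_hasDerivAt_nonpos (hasDerivAt_flatLogPotential hc) fun x => by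
    have : c ≤ max x c := le_max_right x c
    rw [Pi.zero_apply, sub_nonpos, div_le_one (hc.trans_le this)]
    exact this

lemma strictAntiOn_flatLogPotential (hc : 0 < c) : StrictAntiOn (flatLogPotential c) (Ici c) := by
  refine strictAntiOn_of_hasDerivWithinAt_neg (convex_Ici c)
    (fun x _ => (hasDerivAt_flatLogPotential hc x).continuousAt.continuousWithinAt)
    (fun x _ => (hasDerivAt_flatLogPotential hc x).hasDerivWithinAt) fun x hx => ?_
  rw [interior_Ici] at hx
  rw [max_eq_left hx.le, sub_neg, div_lt_one (hc.trans hx)]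
  exact hx

lemma le_of_flatLogPotential_le {x y : ℝ} (hc : 0 < c) (hy : c ≤ y)
    (h : flatLogPotential c y ≤ flatLogPotential c x) : x ≤ y := by
  by_contra! hxy
  exact (strictAntiOn_flatLogPotential hc hy (hy.trans hxy.le) hxy).not_ge h

end flatLogPotential

lemma sir_flatLogPotential_rate_nonneg {β γ a s i : ℝ} (hβ : 0 < β) (hγ : 0 < γ)
    (ha₀ : 0 ≤ a) (ha₁ : a ≤ 1) (hi : 0 < i) :
    0 ≤ (γ / β / max s (γ / β) - 1) * -(β * (1 - a) * s * i) - (β * (1 - a) * s - γ) * i := by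
  rcases le_or_gt s (γ / β) with hs | hs
  · have hβs : β * s ≤ γ := by rwa [le_div_iff₀' hβ] at hs
    have : β * (1 - a) * s ≤ γ := by nlinarith
    rw [max_eq_right hs, div_self (div_pos hγ hβ).ne']
    nlinarith
  · have hs₀ : 0 < s := (div_pos hγ hβ).trans hs
    have hrate : (γ / β / s - 1) * -(β * (1 - a) * s * i) - (β * (1 - a) * s - γ) * i
        = γ * a * i := by
      field_simp
      ring
    rw [max_eq_left hs.le, hrate]
    positivity

lemma monotoneOn_sir_flatLogPotential_sub {β γ : ℝ} (hβ : 0 < β) (hγ : 0 < γ) {D : Set ℝ}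
    (hD : Convex ℝ D) {a s i : ℝ → ℝ} (ha : ∀ t ∈ D, a t ∈ Icc 0 1)
    (hs : ∀ t ∈ D, HasDerivAt s (-(β * (1 - a t) * s t * i t)) t)
    (hi : ∀ t ∈ D, HasDerivAt i ((β * (1 - a t) * s t - γ) * i t) t)
    (hipos : ∀ t ∈ D, 0 < i t) :
    MonotoneOn (fun t => flatLogPotential (γ / β) (s t) - i t) D := by
  have hW : ∀ t ∈ D, HasDerivAt (fun t => flatLogPotential (γ / β) (s t) - i t)
      ((γ / β / max (s t) (γ / β) - 1) * -(β * (1 - a t) * s t * i t)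
        - (β * (1 - a t) * s t - γ) * i t) t := fun t ht =>
    ((hasDerivAt_flatLogPotential (div_pos hγ hβ) (s t)).comp t (hs t ht)).sub (hi t ht)
  exact monotoneOn_of_hasDerivWithinAt_nonneg hD
    (fun t ht => (hW t ht).continuousAt.continuousWithinAt)
    (fun t ht => (hW t (interior_subset ht)).hasDerivWithinAt)
    fun t ht => sir_flatLogPotential_rate_nonneg hβ hγ (ha t (interior_subset ht)).1
      (ha t (interior_subset ht)).2 (hipos t (interior_subset ht))

theorem below_curve_invariant_general
    (β γ abar T K : ℝ) (hγ : 0 < γ) (hγβ : γ < β) (habar : abar ∈ Ioo (0:ℝ) 1)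
    (a s i φ : ℝ → ℝ) (ha : ∀ t, a t ∈ Icc (0:ℝ) abar)
    (hs : ∀ t ∈ Icc (0:ℝ) T, HasDerivAt s (-(β * (1 - a t) * s t * i t)) t)
    (hi : ∀ t ∈ Icc (0:ℝ) T, HasDerivAt i ((β * (1 - a t) * s t - γ) * i t) t)
    (hipos : ∀ t ∈ Icc (0:ℝ) T, 0 < i t)
    (hφ : ∀ t ∈ Icc (0:ℝ) T,
      γ / β < φ (i t) ∧ -φ (i t) + (γ / β) * Real.log (φ (i t)) = i t + K)
    (h0 : s 0 ≤ φ (i 0)) :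
    ∀ t ∈ Icc (0:ℝ) T, s t ≤ φ (i t) := by
  intro t ht
  have hβ : 0 < β := hγ.trans hγβ
  have hc : 0 < γ / β := div_pos hγ hβ
  have hcurve : ∀ τ ∈ Icc (0:ℝ) T, flatLogPotential (γ / β) (φ (i τ)) = i τ + K := fun τ hτ => by
    rw [flatLogPotential_of_le (hφ τ hτ).1.le]
    linarith [(hφ τ hτ).2]
  have h0mem : (0:ℝ) ∈ Icc 0 T := ⟨le_rfl, ht.1.trans ht.2⟩
  have hmono := monotoneOn_sir_flatLogPotential_sub hβ hγ (convex_Icc 0 T)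
    (fun τ _ => ⟨(ha τ).1, (ha τ).2.trans habar.2.le⟩) hs hi hipos h0mem ht ht.1
  have hstart := antitone_flatLogPotential hc h0
  refine le_of_flatLogPotential_le hc (hφ t ht).1.le ?_
  linarith [hcurve 0 h0mem, hcurve t ht]

/-- forward invariance of the region below the curve `s = φ(i)`
(with `-φ(i) + (γ/β) log φ(i) = i + K`, `φ(i) > γ/β`) for the controlled SIR
system. -/
theorem below_curve_invariant
    (β γ abar T K : ℝ) (hγ : 0 < γ) (hγβ : γ < β) (habar : abar ∈ Ioo (0:ℝ) 1)
    (hT : 0 ≤ T)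
    (a s i φ : ℝ → ℝ) (ha_meas : Measurable a) (ha : ∀ t, a t ∈ Icc (0:ℝ) abar)
    (hs : ∀ t ∈ Icc (0:ℝ) T, HasDerivAt s (-(β * (1 - a t) * s t * i t)) t)
    (hi : ∀ t ∈ Icc (0:ℝ) T, HasDerivAt i ((β * (1 - a t) * s t - γ) * i t) t)
    (hipos : ∀ t ∈ Icc (0:ℝ) T, 0 < i t)
    (hφ : ∀ t ∈ Icc (0:ℝ) T,
      γ / β < φ (i t) ∧ -φ (i t) + (γ / β) * Real.log (φ (i t)) = i t + K)
    (h0 : s 0 ≤ φ (i 0)) :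
    ∀ t ∈ Icc (0:ℝ) T, s t ≤ φ (i t) :=
  below_curve_invariant_general β γ abar T K hγ hγβ habar a s i φ ha hs hi hipos hφ h0
end

section
/- Let ψ̃ be as above (the backward trajectory curve through (γ/β, i*) for control ā). For any measurable control a(t) ∈ [0, ā], if the backward trajectory (s(-t), i(-t)) of the SIR system starts at a point (ψ̃(i₀), i₀) with i₀ < i*, then s(-t) - ψ̃(i(-t)) is nondecreasing in t, hence stays nonnegative; i.e., the region {s ≥ ψ̃(i)} is backward invariant. -/
open Set Filter Topology
open scoped NNReal

/-!
Put `c = γ / (β (1 - ā))` and `F x = -x + c log x` (`sirPotential c`), which is strictly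
increasing on `(0, c]`. The curve `s = ψ̃(i)` is the level set `F s = i + κ` inside
`s ≤ γ / β < c`. Along the controlled flow `d/dt (F s - i) = i (β (1 - a) c - γ) ≥ 0` because
`a ≤ ā`, so backward trajectories starting on the curve satisfy `F s ≥ F (ψ̃ i)`, i.e.
`s ≥ ψ̃ i`. Differentiating `ψ̃ ∘ i` through a local inverse of `F` then gives
`d/dt (s - ψ̃ i) = i (β (1 - a) c s - γ ψ̃ i) / (c - ψ̃ i) ≥ 0`.
-/

theorem pos_of_hasDerivAt_eq_mul {k S : ℝ → ℝ} {K : ℝ≥0} {a b : ℝ}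
    (hk : ∀ t ∈ Icc a b, |k t| ≤ K) (hS : ∀ t ∈ Icc a b, HasDerivAt S (k t * S t) t)
    (ha : 0 < S a) : ∀ t ∈ Icc a b, 0 < S t := by
  intro t₁ ht₁
  by_contra! hS₁
  have hsub₁ : Icc a t₁ ⊆ Icc a b := Icc_subset_Icc_right ht₁.2
  have hcont : ContinuousOn S (Icc a t₁) := fun t ht =>
    (hS t (hsub₁ ht)).continuousAt.continuousWithinAt
  obtain ⟨t₂, ht₂, hzero⟩ := intermediate_value_Icc' ht₁.1 hcont ⟨hS₁, ha.le⟩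
  have hsub₂ : Icc a t₂ ⊆ Icc a b := Icc_subset_Icc_right (ht₂.2.trans ht₁.2)
  have hlip : ∀ t ∈ Ioc a t₂, LipschitzOnWith K (fun x => k t * x) univ := fun t ht => by
    refine ((lipschitzWith_smul (k t)).weaken ?_).lipschitzOnWith
    rw [← NNReal.coe_le_coe, coe_nnnorm, Real.norm_eq_abs]
    exact hk t (hsub₂ (Ioc_subset_Icc_self ht))
  have hvanish := ODE_solution_unique_of_mem_Icc_left (g := fun _ => 0) hlip
    (hcont.mono (Icc_subset_Icc_right ht₂.2))
    (fun t ht => (hS t (hsub₂ (Ioc_subset_Icc_self ht))).hasDerivWithinAt)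
    (fun _ _ => mem_univ _) continuousOn_const
    (fun t _ => by simpa using hasDerivWithinAt_const t (Iic t) (0 : ℝ))
    (fun _ _ => mem_univ _) hzero
  exact ha.ne' (hvanish ⟨le_rfl, ht₂.1⟩)

section LocalInverse

variable {F φ u : ℝ → ℝ} {F' t₀ : ℝ} {s V : Set ℝ}

theorem HasStrictDerivAt.eventuallyEq_localInverse_comp (hF : HasStrictDerivAt F F' (φ t₀))
    (hF' : F' ≠ 0) (hV : V ∈ 𝓝 (φ t₀)) (hinj : InjOn F V) (hφV : ∀ t ∈ s, φ t ∈ V)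
    (hFφ : ∀ t ∈ s, F (φ t) = u t) (hu : ContinuousWithinAt u s t₀) (ht₀ : t₀ ∈ s) :
    φ =ᶠ[𝓝[s] t₀] hF.localInverse F F' (φ t₀) hF' ∘ u := by
  set g := hF.localInverse F F' (φ t₀) hF'
  have hu₀ : u t₀ = F (φ t₀) := (hFφ t₀ ht₀).symm
  have hgc : ContinuousAt g (u t₀) := by
    rw [hu₀]
    exact (hF.to_localInverse hF').hasDerivAt.continuousAt
  have hgu₀ : g (u t₀) = φ t₀ := by
    rw [hu₀]
    exact (hF.eventually_left_inverse hF').self_of_nhds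
  have hgV : ∀ᶠ t in 𝓝[s] t₀, g (u t) ∈ V := by
    rw [← hgu₀] at hV
    exact hgc.comp_continuousWithinAt hu hV
  have hright : ∀ᶠ t in 𝓝[s] t₀, F (g (u t)) = u t := by
    have hFg := hF.eventually_right_inverse hF'
    rw [← hu₀] at hFg
    exact hu.eventually hFg
  filter_upwards [hgV, hright, self_mem_nhdsWithin] with t hgt hFg hts
  exact hinj (hφV t hts) hgt (by rw [hFφ t hts, Function.comp_apply, hFg])

theorem HasStrictDerivAt.continuousWithinAt_of_comp_eq (hF : HasStrictDerivAt F F' (φ t₀))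
    (hF' : F' ≠ 0) (hV : V ∈ 𝓝 (φ t₀)) (hinj : InjOn F V) (hφV : ∀ t ∈ s, φ t ∈ V)
    (hFφ : ∀ t ∈ s, F (φ t) = u t) (hu : ContinuousWithinAt u s t₀) (ht₀ : t₀ ∈ s) :
    ContinuousWithinAt φ s t₀ := by
  have hu₀ : u t₀ = F (φ t₀) := (hFφ t₀ ht₀).symm
  have hgc : ContinuousAt (hF.localInverse F F' (φ t₀) hF') (u t₀) :=
    hu₀ ▸ (hF.to_localInverse hF').hasDerivAt.continuousAt
  exact (hgc.comp_continuousWithinAt hu).congr_of_eventuallyEq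
    (hF.eventuallyEq_localInverse_comp hF' hV hinj hφV hFφ hu ht₀)
    (hu₀ ▸ (hF.eventually_left_inverse hF').self_of_nhds).symm

theorem HasStrictDerivAt.hasDerivAt_of_comp_eq {u' : ℝ} (hF : HasStrictDerivAt F F' (φ t₀))
    (hF' : F' ≠ 0) (hV : V ∈ 𝓝 (φ t₀)) (hinj : InjOn F V) (hφV : ∀ t ∈ s, φ t ∈ V)
    (hFφ : ∀ t ∈ s, F (φ t) = u t) (hu : HasDerivAt u u' t₀) (hs : s ∈ 𝓝 t₀) :
    HasDerivAt φ (F'⁻¹ * u') t₀ := by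
  have hu₀ : u t₀ = F (φ t₀) := (hFφ t₀ (mem_of_mem_nhds hs)).symm
  have hg : HasDerivAt (hF.localInverse F F' (φ t₀) hF') F'⁻¹ (u t₀) :=
    hu₀ ▸ (hF.to_localInverse hF').hasDerivAt
  have heq := hF.eventuallyEq_localInverse_comp hF' hV hinj hφV hFφ
    hu.continuousAt.continuousWithinAt (mem_of_mem_nhds hs)
  rw [nhdsWithin_eq_nhds.2 hs] at heq
  exact (hg.comp t₀ hu).congr_of_eventuallyEq heq

end LocalInverse

noncomputable def sirPotential (c x : ℝ) : ℝ := -x + c * Real.log x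

theorem hasStrictDerivAt_sirPotential (c : ℝ) {x : ℝ} (hx : x ≠ 0) :
    HasStrictDerivAt (sirPotential c) (-1 + c * x⁻¹) x :=
  (hasStrictDerivAt_id x).neg.add ((Real.hasStrictDerivAt_log hx).const_mul c)

theorem sirPotential_deriv_pos {c x : ℝ} (hx : 0 < x) (hxc : x < c) : 0 < -1 + c * x⁻¹ := by
  have := (one_lt_div hx).2 hxc
  rw [div_eq_mul_inv] at this
  linarith

theorem strictMonoOn_sirPotential (c : ℝ) : StrictMonoOn (sirPotential c) (Ioc 0 c) := by
  refine strictMonoOn_of_deriv_pos (convex_Ioc 0 c)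
    (fun x hx =>
      (hasStrictDerivAt_sirPotential c hx.1.ne').hasDerivAt.continuousAt.continuousWithinAt)
    fun x hx => ?_
  rw [interior_Ioc] at hx
  rw [(hasStrictDerivAt_sirPotential c hx.1.ne').hasDerivAt.deriv]
  exact sirPotential_deriv_pos hx.1 hx.2

theorem le_of_sirPotential_le {c x y : ℝ} (hx : 0 < x) (hy : y ∈ Ioc 0 c)
    (h : sirPotential c y ≤ sirPotential c x) : y ≤ x := by
  by_contra! hxy
  exact (strictMonoOn_sirPotential c ⟨hx, hxy.le.trans hy.2⟩ hy hxy).not_ge h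

theorem sir_sub_implicit_deriv_nonneg {r γ c p s i : ℝ} (hγ : 0 ≤ γ) (hr : γ ≤ r * c)
    (hp : 0 < p) (hpc : p < c) (hps : p ≤ s) (hi : 0 ≤ i) :
    0 ≤ r * s * i - (-1 + c * p⁻¹)⁻¹ * -((r * s - γ) * i) := by
  have hcp : 0 < c - p := sub_pos.2 hpc
  have hinv : (-1 + c * p⁻¹)⁻¹ = p / (c - p) := by
    rw [show -1 + c * p⁻¹ = (c - p) / p by field_simp; ring, inv_div]
  have hrewrite : r * s * i - (-1 + c * p⁻¹)⁻¹ * -((r * s - γ) * i)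
      = i * (r * c * s - γ * p) / (c - p) := by
    rw [hinv]
    field_simp
    ring
  rw [hrewrite]
  refine div_nonneg (mul_nonneg hi ?_) hcp.le
  nlinarith [mul_le_mul_of_nonneg_right hr (hp.le.trans hps), mul_le_mul_of_nonneg_left hps hγ]

section SIR

variable {r S I : ℝ → ℝ} {γ c a b : ℝ}

theorem monotoneOn_sirPotential_sub (hr : ∀ t ∈ Icc a b, γ ≤ r t * c)
    (hSpos : ∀ t ∈ Icc a b, 0 < S t) (hInonneg : ∀ t ∈ Icc a b, 0 ≤ I t)
    (hS : ∀ t ∈ Icc a b, HasDerivAt S (r t * S t * I t) t)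
    (hI : ∀ t ∈ Icc a b, HasDerivAt I (-((r t * S t - γ) * I t)) t) :
    MonotoneOn (fun t => sirPotential c (S t) - I t) (Icc a b) := by
  have hderiv : ∀ t ∈ Icc a b,
      HasDerivAt (fun t => sirPotential c (S t) - I t) (I t * (r t * c - γ)) t := by
    intro t ht
    have hSt := (hSpos t ht).ne'
    refine (((hasStrictDerivAt_sirPotential c hSt).hasDerivAt.comp t (hS t ht)).sub
      (hI t ht)).congr_deriv ?_
    field_simp
    ring
  refine monotoneOn_of_hasDerivWithinAt_nonneg (convex_Icc a b)
    (fun t ht => (hderiv t ht).continuousAt.continuousWithinAt)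
    (fun t ht => (hderiv t (interior_subset ht)).hasDerivWithinAt) fun t ht => ?_
  exact mul_nonneg (hInonneg t (interior_subset ht)) (sub_nonneg.2 (hr t (interior_subset ht)))

theorem monotoneOn_sub_of_sirPotential_eq {φ : ℝ → ℝ} {κ : ℝ} (hγ : 0 ≤ γ)
    (hr : ∀ t ∈ Icc a b, γ ≤ r t * c) (hSpos : ∀ t ∈ Icc a b, 0 < S t)
    (hInonneg : ∀ t ∈ Icc a b, 0 ≤ I t)
    (hS : ∀ t ∈ Icc a b, HasDerivAt S (r t * S t * I t) t)
    (hI : ∀ t ∈ Icc a b, HasDerivAt I (-((r t * S t - γ) * I t)) t)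
    (hφ : ∀ t ∈ Icc a b, φ t ∈ Ioo 0 c)
    (hφeq : ∀ t ∈ Icc a b, sirPotential c (φ t) = I t + κ) (ha : S a = φ a) :
    MonotoneOn (fun t => S t - φ t) (Icc a b) ∧ ∀ t ∈ Icc a b, φ t ≤ S t := by
  have hle : ∀ t ∈ Icc a b, φ t ≤ S t := by
    intro t ht
    have hmono := monotoneOn_sirPotential_sub hr hSpos hInonneg hS hI
      ⟨le_rfl, ht.1.trans ht.2⟩ ht ht.1
    refine le_of_sirPotential_le (hSpos t ht) (Ioo_subset_Ioc_self (hφ t ht)) ?_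
    simp only [ha, hφeq a ⟨le_rfl, ht.1.trans ht.2⟩] at hmono
    linarith [hφeq t ht]
  have hinj : InjOn (sirPotential c) (Ioo 0 c) :=
    (strictMonoOn_sirPotential c).injOn.mono Ioo_subset_Ioc_self
  have hderF (t) (ht : t ∈ Icc a b) := hasStrictDerivAt_sirPotential c (hφ t ht).1.ne'
  have hF' (t) (ht : t ∈ Icc a b) := (sirPotential_deriv_pos (hφ t ht).1 (hφ t ht).2).ne'
  have hV (t) (ht : t ∈ Icc a b) := isOpen_Ioo.mem_nhds (hφ t ht)
  refine ⟨monotoneOn_of_hasDerivWithinAt_nonneg (convex_Icc a b)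
    (f' := fun t => r t * S t * I t - (-1 + c * (φ t)⁻¹)⁻¹ * -((r t * S t - γ) * I t))
    (fun t ht => ?_) (fun t ht => ?_) (fun t ht => ?_), hle⟩
  · exact (hS t ht).continuousAt.continuousWithinAt.sub <|
      (hderF t ht).continuousWithinAt_of_comp_eq (hF' t ht) (hV t ht) hinj hφ hφeq
        ((hI t ht).add_const κ).continuousAt.continuousWithinAt ht
  · rw [interior_Icc] at ht
    have ht' := Ioo_subset_Icc_self ht
    exact ((hS t ht').sub ((hderF t ht').hasDerivAt_of_comp_eq (hF' t ht') (hV t ht') hinj hφ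
      hφeq ((hI t ht').add_const κ) (Icc_mem_nhds ht.1 ht.2))).hasDerivWithinAt
  · rw [interior_Icc] at ht
    have ht' := Ioo_subset_Icc_self ht
    exact sir_sub_implicit_deriv_nonneg hγ (hr t ht') (hφ t ht').1 (hφ t ht').2 (hle t ht')
      (hInonneg t ht')

end SIR

theorem backward_invariance_psi_tilde_general
    (β γ abar istar T : ℝ) (hγ : 0 < γ) (habar : abar ∈ Ioo (0:ℝ) 1)
    (hcond : γ < β * (1 - abar)) (hT : 0 ≤ T)
    (ψt : ℝ → ℝ)
    (hψt : ∀ iv ∈ Ioc (0:ℝ) istar,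
      0 < ψt iv ∧ ψt iv ≤ γ / β ∧
      -ψt iv + (γ / (β * (1 - abar))) * Real.log (ψt iv)
        = iv - istar + (γ / (β * (1 - abar))) * Real.log (γ / β) - γ / β)
    (A S I : ℝ → ℝ) (hA : ∀ t, A t ∈ Icc (0:ℝ) abar)
    (hS : ∀ t ∈ Icc (0:ℝ) T, HasDerivAt S (β * (1 - A t) * S t * I t) t)
    (hI : ∀ t ∈ Icc (0:ℝ) T, HasDerivAt I (-((β * (1 - A t) * S t - γ) * I t)) t)
    (hIrange : ∀ t ∈ Icc (0:ℝ) T, I t ∈ Ioc (0:ℝ) istar)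
    (h0 : S 0 = ψt (I 0)) :
    MonotoneOn (fun t => S t - ψt (I t)) (Icc (0:ℝ) T) ∧
    ∀ t ∈ Icc (0:ℝ) T, 0 ≤ S t - ψt (I t) := by
  set c := γ / (β * (1 - abar))
  have hβa : 0 < β * (1 - abar) := hγ.trans hcond
  have hβ : 0 < β := (pos_iff_pos_of_mul_pos hβa).2 (sub_pos.2 habar.2)
  -- `ā > 0` keeps `ψ̃` strictly below `c`, where `F' ≠ 0` and `F` can be inverted locally.
  have hγβ : γ / β < c :=
    div_lt_div_of_pos_left hγ hβa (mul_lt_of_lt_one_right hβ (by linarith [habar.1]))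
  have hr (t : ℝ) : γ ≤ β * (1 - A t) * c :=
    calc γ = β * (1 - abar) * c := (mul_div_cancel₀ γ hβa.ne').symm
      _ ≤ β * (1 - A t) * c := mul_le_mul_of_nonneg_right
        (mul_le_mul_of_nonneg_left (by linarith [(hA t).2]) hβ.le) (div_pos hγ hβa).le
  have hφ (t) (ht : t ∈ Icc (0:ℝ) T) : ψt (I t) ∈ Ioo 0 c :=
    ⟨(hψt _ (hIrange t ht)).1, (hψt _ (hIrange t ht)).2.1.trans_lt hγβ⟩
  have hk (t) (ht : t ∈ Icc (0:ℝ) T) : |β * (1 - A t) * I t| ≤ (β * istar).toNNReal := by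
    obtain ⟨hI₀, hIi⟩ := hIrange t ht
    have hAt : 0 ≤ 1 - A t := by linarith [(hA t).2, habar.2]
    have hAI : (1 - A t) * I t ≤ istar := by nlinarith [(hA t).1]
    rw [abs_of_nonneg (by positivity), mul_assoc]
    exact (mul_le_mul_of_nonneg_left hAI hβ.le).trans (Real.le_coe_toNNReal _)
  have hSpos := pos_of_hasDerivAt_eq_mul hk (fun t ht => (hS t ht).congr_deriv (by ring))
    (h0 ▸ (hφ 0 ⟨le_rfl, hT⟩).1)
  obtain ⟨hmono, hle⟩ := monotoneOn_sub_of_sirPotential_eq (φ := fun t => ψt (I t))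
    (κ := -istar + c * Real.log (γ / β) - γ / β) hγ.le (fun t _ => hr t) hSpos
    (fun t ht => (hIrange t ht).1.le) hS hI hφ
    (fun t ht => (hψt _ (hIrange t ht)).2.2.trans (by ring)) h0
  exact ⟨hmono, fun t ht => sub_nonneg.2 (hle t ht)⟩

/-- backward invariance of the region `{s ≥ ψ̃(i)}`: along any backward
trajectory of the controlled SIR system starting on the curve, `s(-t) - ψ̃(i(-t))` is
nondecreasing, hence stays nonnegative. -/
theorem backward_invariance_psi_tilde
    (β γ abar istar T : ℝ) (hγ : 0 < γ) (habar : abar ∈ Ioo (0:ℝ) 1)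
    (hcond : γ < β * (1 - abar)) (histar : istar ∈ Ioo (0:ℝ) 1) (hT : 0 ≤ T)
    (ψt : ℝ → ℝ)
    (hψt : ∀ iv ∈ Ioc (0:ℝ) istar,
      0 < ψt iv ∧ ψt iv ≤ γ / β ∧
      -ψt iv + (γ / (β * (1 - abar))) * Real.log (ψt iv)
        = iv - istar + (γ / (β * (1 - abar))) * Real.log (γ / β) - γ / β)
    (A S I : ℝ → ℝ) (hA_meas : Measurable A) (hA : ∀ t, A t ∈ Icc (0:ℝ) abar)
    (hS : ∀ t ∈ Icc (0:ℝ) T, HasDerivAt S (β * (1 - A t) * S t * I t) t)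
    (hI : ∀ t ∈ Icc (0:ℝ) T, HasDerivAt I (-((β * (1 - A t) * S t - γ) * I t)) t)
    (hIrange : ∀ t ∈ Icc (0:ℝ) T, I t ∈ Ioc (0:ℝ) istar)
    (hI0 : I 0 < istar) (h0 : S 0 = ψt (I 0)) :
    MonotoneOn (fun t => S t - ψt (I t)) (Icc (0:ℝ) T) ∧
    ∀ t ∈ Icc (0:ℝ) T, 0 ≤ S t - ψt (I t) :=
  backward_invariance_psi_tilde_general β γ abar istar T hγ habar hcond hT ψt hψt A S I hA hS hI
    hIrange h0
end

section
/- With maximal control ā, at any boundary point (φ̄(i), i) with i ∈ (0, i*) of the set B^s̄ (where φ̄ = φ^{s̄} satisfies φ̄'(i) = βφ̄(i)/(γ - βφ̄(i)) and φ̄(i) > γ/β), the inner product of the vector field (-β(1-ā)s i, (β(1-ā)s - γ)i) with the outward normal (1, -φ̄'(i))/√(1+φ̄'(i)²) equals (1/√(1+|φ̄'(i)|²)) · āγi · βφ̄(i)/(γ - βφ̄(i)), which is strictly negative (inward pointing). -/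
open Set

/-! Clearing the denominator `γ - βφ̄`, the `β²(1-ā)φ̄²` terms cancel and the inner product
collapses to `āγi · φ̄'(i)`; it is negative because `φ̄ > γ/β` makes the slope `φ̄'` negative. -/

theorem vectorField_dot_normal_eq (β γ a φ i : ℝ) (hd : γ - β * φ ≠ 0) :
    (-(β * (1 - a) * φ * i)) * 1 + ((β * (1 - a) * φ - γ) * i) * (-(β * φ / (γ - β * φ)))
      = a * γ * i * (β * φ / (γ - β * φ)) := by
  field_simp
  ring

theorem sub_mul_neg_of_div_lt {β γ φ : ℝ} (hβ : 0 < β) (hφ : γ / β < φ) : γ - β * φ < 0 := by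
  rw [div_lt_iff₀ hβ] at hφ
  linarith

theorem inward_pointing_max_control_general
    (β γ abar istar : ℝ) (hγ : 0 < γ) (habar : abar ∈ Ioo (0:ℝ) 1)
    (hcond : γ < β * (1 - abar))
    (φb : ℝ → ℝ)
    (hφb : ∀ iv ∈ Ioo (0:ℝ) istar, γ / β < φb iv) :
    ∀ iv ∈ Ioo (0:ℝ) istar,
      (1 / Real.sqrt (1 + (β * φb iv / (γ - β * φb iv))^2)) *
          ((-(β * (1 - abar) * φb iv * iv)) * 1 +
            ((β * (1 - abar) * φb iv - γ) * iv) * (-(β * φb iv / (γ - β * φb iv))))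
        = (1 / Real.sqrt (1 + (β * φb iv / (γ - β * φb iv))^2)) *
            (abar * γ * iv * (β * φb iv / (γ - β * φb iv))) ∧
      (1 / Real.sqrt (1 + (β * φb iv / (γ - β * φb iv))^2)) *
          (abar * γ * iv * (β * φb iv / (γ - β * φb iv))) < 0 := by
  intro iv hiv
  have hβ : 0 < β := pos_of_mul_pos_left (hγ.trans hcond) (sub_pos.2 habar.2).le
  have hφ := hφb iv hiv
  have hden := sub_mul_neg_of_div_lt hβ hφ
  have hslope : β * φb iv / (γ - β * φb iv) < 0 :=
    div_neg_of_pos_of_neg (mul_pos hβ ((div_pos hγ hβ).trans hφ)) hden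
  have hcoef : 0 < abar * γ * iv := mul_pos (mul_pos habar.1 hγ) hiv.1
  refine ⟨congrArg _ (vectorField_dot_normal_eq _ _ _ _ _ hden.ne), ?_⟩
  exact mul_neg_of_pos_of_neg (one_div_pos.2 (Real.sqrt_pos.2 (by positivity)))
    (mul_neg_of_pos_of_neg hcoef hslope)

/-- with maximal control `ā`, the vector field is strictly inward
pointing along the curved part of the boundary of `B^s̄`. -/
theorem inward_pointing_max_control
    (β γ abar istar : ℝ) (hγ : 0 < γ) (habar : abar ∈ Ioo (0:ℝ) 1)
    (hcond : γ < β * (1 - abar)) (histar : istar ∈ Ioo (0:ℝ) 1)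
    (φb : ℝ → ℝ)
    (hφb : ∀ iv ∈ Ioo (0:ℝ) istar, γ / β < φb iv)
    (hφb' : ∀ iv ∈ Ioo (0:ℝ) istar,
      HasDerivAt φb (β * φb iv / (γ - β * φb iv)) iv) :
    ∀ iv ∈ Ioo (0:ℝ) istar,
      (1 / Real.sqrt (1 + (β * φb iv / (γ - β * φb iv))^2)) *
          ((-(β * (1 - abar) * φb iv * iv)) * 1 +
            ((β * (1 - abar) * φb iv - γ) * iv) * (-(β * φb iv / (γ - β * φb iv))))
        = (1 / Real.sqrt (1 + (β * φb iv / (γ - β * φb iv))^2)) *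
            (abar * γ * iv * (β * φb iv / (γ - β * φb iv))) ∧
      (1 / Real.sqrt (1 + (β * φb iv / (γ - β * φb iv))^2)) *
          (abar * γ * iv * (β * φb iv / (γ - β * φb iv))) < 0 :=
  inward_pointing_max_control_general β γ abar istar hγ habar hcond φb hφb
end
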